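/- Constructive satisfaction of negation-normal-form epistemic formulas is preserved under extension of must/can structures: if Y ⊑ Y' (i.e., T(Y_μ) ⊆ T(Y'_μ) and T(Y_ν) ⊇ T(Y'_ν)) over the same basis, then for every formula φ and every state s reachable in Y'_ν, Y, s ⊨ nnf(φ) implies Y', s ⊨ nnf(φ). -/
import Mathlib


namespace KBP

/-- `k`-step reachable states of a transition system with initial states `S0`. -/
def RSk {S : Type} (S0 : Set S) (T : Set (S × S)) : ℕ → Set S
  | 0 => S0
  | k + 1 => RSk S0 T k ∪ {s' | ∃ s ∈ RSk S0 T k, (s, s') ∈ T}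

/-- All reachable states. -/
def Reach {S : Type} (S0 : Set S) (T : Set (S × S)) : Set S := ⋃ k, RSk S0 T k

/-- Epistemic formulas (with the abbreviations `true`, `∨`, `M` as primitives). -/
inductive EFrm (P A : Type) : Type
  | prop : P → EFrm P A
  | nprop : P → EFrm P A
  | fls : EFrm P A
  | tru : EFrm P A
  | neg : EFrm P A → EFrm P A
  | and : EFrm P A → EFrm P A → EFrm P A
  | or : EFrm P A → EFrm P A → EFrm P A
  | K : A → EFrm P A → EFrm P A
  | M : A → EFrm P A → EFrm P A

/-- Negation normal form; `nnfAux false φ = nnf φ`, `nnfAux true φ = nnf ¬φ`. -/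
def nnfAux {P A : Type} : Bool → EFrm P A → EFrm P A
  | false, .prop p => .prop p
  | false, .nprop p => .nprop p
  | false, .fls => .fls
  | false, .tru => .tru
  | false, .neg φ => nnfAux true φ
  | false, .and φ ψ => .and (nnfAux false φ) (nnfAux false ψ)
  | false, .or φ ψ => .or (nnfAux false φ) (nnfAux false ψ)
  | false, .K a φ => .K a (nnfAux false φ)
  | false, .M a φ => .M a (nnfAux false φ)
  | true, .prop p => .nprop p
  | true, .nprop p => .prop p
  | true, .fls => .tru
  | true, .tru => .fls
  | true, .neg φ => nnfAux false φ
  | true, .and φ ψ => .or (nnfAux true φ) (nnfAux true ψ)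
  | true, .or φ ψ => .and (nnfAux true φ) (nnfAux true ψ)
  | true, .K a φ => .M a (nnfAux true φ)
  | true, .M a φ => .K a (nnfAux true φ)

/-- Constructive satisfaction of (negation-normal-form) formulas:
`K` over the upper bound, `M` over the lower bound. -/
def csat (E : A → Set (S × S)) (L : S → Set P) (S0 : Set S)
    (Tμ Tν : Set (S × S)) : S → EFrm P A → Prop
  | s, .prop p => p ∈ L s
  | s, .nprop p => p ∉ L s
  | _, .fls => False
  | _, .tru => True
  | s, .neg φ => ¬ csat E L S0 Tμ Tν s φ
  | s, .and φ ψ => csat E L S0 Tμ Tν s φ ∧ csat E L S0 Tμ Tν s ψ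
  | s, .or φ ψ => csat E L S0 Tμ Tν s φ ∨ csat E L S0 Tμ Tν s ψ
  | s, .K a φ => ∀ s' ∈ Reach S0 Tν, (s, s') ∈ E a → csat E L S0 Tμ Tν s' φ
  | s, .M a φ => ∃ s' ∈ Reach S0 Tμ, (s, s') ∈ E a ∧ csat E L S0 Tμ Tν s' φ

lemma RSk_mono {S : Type} (S0 : Set S) {T T' : Set (S × S)} (hT : T ⊆ T') :
    ∀ k, RSk S0 T k ⊆ RSk S0 T' k
  | 0 => subset_rfl
  | k + 1 => by
    intro s hs
    rcases hs with hs | ⟨t, ht, htT⟩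
    · exact Or.inl (RSk_mono S0 hT k hs)
    · exact Or.inr ⟨t, RSk_mono S0 hT k ht, hT htT⟩

lemma Reach_mono {S : Type} (S0 : Set S) {T T' : Set (S × S)} (hT : T ⊆ T') :
    Reach S0 T ⊆ Reach S0 T' := by
  intro s hs
  rcases Set.mem_iUnion.1 hs with ⟨k, hk⟩
  exact Set.mem_iUnion.2 ⟨k, RSk_mono S0 hT k hk⟩

lemma csat_nnf_aux {S P A : Type} (E : A → Set (S × S))
    (L : S → Set P) (S0 : Set S) (Tμ Tν Tμ' Tν' : Set (S × S))
    (h' : Tμ' ⊆ Tν') (hlo : Tμ ⊆ Tμ') (hup : Tν' ⊆ Tν)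
    (φ : EFrm P A) : ∀ (b : Bool) (s : S),
    csat E L S0 Tμ Tν s (nnfAux b φ) →
    csat E L S0 Tμ' Tν' s (nnfAux b φ) := by
  induction φ with
  | prop p => intro b s; cases b <;> exact id
  | nprop p => intro b s; cases b <;> exact id
  | fls => intro b s; cases b <;> exact id
  | tru => intro b s; cases b <;> exact id
  | neg φ ih =>
    intro b s
    cases b <;> simp only [nnfAux]
    · exact ih true s
    · exact ih false s
  | and φ ψ ihφ ihψ =>
    intro b s
    cases b <;> simp only [nnfAux, csat]
    · exact fun ⟨a, b⟩ => ⟨ihφ false s a, ihψ false s b⟩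
    · exact fun hh => hh.elim (fun a => Or.inl (ihφ true s a))
        (fun b => Or.inr (ihψ true s b))
  | or φ ψ ihφ ihψ =>
    intro b s
    cases b <;> simp only [nnfAux, csat]
    · exact fun hh => hh.elim (fun a => Or.inl (ihφ false s a))
        (fun b => Or.inr (ihψ false s b))
    · exact fun ⟨a, b⟩ => ⟨ihφ true s a, ihψ true s b⟩
  | K a φ ih =>
    intro b s
    cases b <;> simp only [nnfAux, csat]
    · intro hsat s' hs' hE
      exact ih false s' (hsat s' (Reach_mono S0 hup hs') hE)
    · rintro ⟨s', hs', hE, hsat⟩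
      exact ⟨s', Reach_mono S0 hlo hs', hE, ih true s' hsat⟩
  | M a φ ih =>
    intro b s
    cases b <;> simp only [nnfAux, csat]
    · rintro ⟨s', hs', hE, hsat⟩
      exact ⟨s', Reach_mono S0 hlo hs', hE, ih false s' hsat⟩
    · intro hsat s' hs' hE
      exact ih true s' (hsat s' (Reach_mono S0 hup hs') hE)

/-- Constructive satisfaction of negation-normal-form formulas is preserved
under extension of must/can structures (lower bound grows, upper shrinks). -/
theorem csat_nnf_preserved_by_extension {S P A : Type} (E : A → Set (S × S))
    (L : S → Set P) (S0 : Set S) (Tμ Tν Tμ' Tν' : Set (S × S))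
    (h : Tμ ⊆ Tν) (h' : Tμ' ⊆ Tν') (hlo : Tμ ⊆ Tμ') (hup : Tν' ⊆ Tν)
    (φ : EFrm P A) (s : S) (hs : s ∈ Reach S0 Tν')
    (hsat : csat E L S0 Tμ Tν s (nnfAux false φ)) :
    csat E L S0 Tμ' Tν' s (nnfAux false φ) :=
  csat_nnf_aux E L S0 Tμ Tν Tμ' Tν' h' hlo hup φ false s hsat

end KBP
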